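/- The map π is an involution: for every nonzero x ∈ F^4 and any two linearly independent vectors y, z ∈ π[x], setting δ_ij = y_i·z_j + y_j·z_i for distinct i, j ∈ {0,1,2,3}, the vector w = (δ02^(ω/2), δ31^(ω/2), δ03^(ω/2), δ21^(ω/2)) is nonzero and is a scalar multiple of x, i.e. [w] = [x] in PG(3,q). -/
import Mathlib


open Matrix

noncomputable section

abbrev F (n : ℕ) : Type := GaloisField 2 (2 * n + 1)

def om (n : ℕ) : ℕ := 2 ^ (n + 1)

/-- The four spanning vectors of the polar line `π[x]`. -/
def polarGens (n : ℕ) (x : Fin 4 → F n) : Set (Fin 4 → F n) :=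
  {![0, (x 0 * x 1 + x 2 * x 3) ^ 2 ^ n, x 0 ^ om n, x 2 ^ om n],
   ![(x 0 * x 1 + x 2 * x 3) ^ 2 ^ n, 0, x 3 ^ om n, x 1 ^ om n],
   ![x 0 ^ om n, x 3 ^ om n, 0, (x 0 * x 1 + x 2 * x 3) ^ 2 ^ n],
   ![x 2 ^ om n, x 1 ^ om n, (x 0 * x 1 + x 2 * x 3) ^ 2 ^ n, 0]}

/-- The polar line `π[x]`, as a subspace of `F⁴`. -/
def polarSpan (n : ℕ) (x : Fin 4 → F n) : Submodule (F n) (Fin 4 → F n) :=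
  Submodule.span (F n) (polarGens n x)

theorem polar_involution (n : ℕ) (hn : 1 ≤ n) (x : Fin 4 → F n) (hx : x ≠ 0)
    (y z : Fin 4 → F n) (hy : y ∈ polarSpan n x) (hz : z ∈ polarSpan n x)
    (hind : LinearIndependent (F n) ![y, z]) :
    (![(y 0 * z 2 + y 2 * z 0) ^ 2 ^ n,
       (y 3 * z 1 + y 1 * z 3) ^ 2 ^ n,
       (y 0 * z 3 + y 3 * z 0) ^ 2 ^ n,
       (y 2 * z 1 + y 1 * z 2) ^ 2 ^ n] : Fin 4 → F n) ≠ 0 ∧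
    ∃ t : F n, t ≠ 0 ∧
      (![(y 0 * z 2 + y 2 * z 0) ^ 2 ^ n,
         (y 3 * z 1 + y 1 * z 3) ^ 2 ^ n,
         (y 0 * z 3 + y 3 * z 0) ^ 2 ^ n,
         (y 2 * z 1 + y 1 * z 2) ^ 2 ^ n] : Fin 4 → F n) = t • x := by
  classical
  have h2 : (2 : F n) = 0 := by
    have := CharP.cast_eq_zero (F n) 2
    simpa using this
  -- the key power identity
  have hcard : Nat.card (F n) = 2 ^ (2 * n + 1) := GaloisField.card 2 (2 * n + 1) (by omega)
  haveI : Fintype (F n) := Fintype.ofFinite _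
  have hpow : ∀ t : F n, (t ^ om n) ^ 2 ^ n = t := by
    intro t
    rw [om, ← pow_mul]
    have h : 2 ^ (n + 1) * 2 ^ n = 2 ^ (2 * n + 1) := by
      rw [← pow_add]; congr 1; omega
    rw [h, ← hcard, Nat.card_eq_fintype_card]
    exact FiniteField.pow_card t
  set s : F n := (x 0 * x 1 + x 2 * x 3) ^ 2 ^ n with hs_def
  set u0 : F n := x 0 ^ om n with hu0
  set u1 : F n := x 1 ^ om n with hu1
  set u2 : F n := x 2 ^ om n with hu2
  set u3 : F n := x 3 ^ om n with hu3
  have hs : s ^ 2 = u0 * u1 + u2 * u3 := by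
    have h1 : s ^ 2 = (x 0 * x 1 + x 2 * x 3) ^ 2 ^ (n + 1) := by
      rw [hs_def, ← pow_mul, pow_succ]
    rw [h1, add_pow_char_pow, mul_pow, mul_pow, hu0, hu1, hu2, hu3, om]
  -- express y, z in terms of coordinates
  set g : Fin 4 → (Fin 4 → F n) :=
    ![![0, s, u0, u2], ![s, 0, u3, u1], ![u0, u3, 0, s], ![u2, u1, s, 0]] with hg
  have hrange : polarGens n x = Set.range g := by
    have h0 : polarGens n x = {![0, s, u0, u2], ![s, 0, u3, u1], ![u0, u3, 0, s], ![u2, u1, s, 0]} := rfl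
    rw [h0, hg]
    ext v
    simp only [Matrix.range_cons, Matrix.range_empty, Set.mem_union, Set.mem_singleton_iff,
      Set.mem_insert_iff, Set.mem_empty_iff_false, or_false]
  rw [polarSpan, hrange] at hy hz
  obtain ⟨a, ha⟩ := (Submodule.mem_span_range_iff_exists_fun _).mp hy
  obtain ⟨b, hb⟩ := (Submodule.mem_span_range_iff_exists_fun _).mp hz
  have hyc : ∀ k, y k = a 0 * g 0 k + a 1 * g 1 k + a 2 * g 2 k + a 3 * g 3 k := by
    intro k
    rw [← ha]
    simp [Fin.sum_univ_four]
  have hzc : ∀ k, z k = b 0 * g 0 k + b 1 * g 1 k + b 2 * g 2 k + b 3 * g 3 k := by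
    intro k
    rw [← hb]
    simp [Fin.sum_univ_four]
  have hy0 : y 0 = a 1 * s + a 2 * u0 + a 3 * u2 := by rw [hyc 0]; simp [hg] <;> ring
  have hy1 : y 1 = a 0 * s + a 2 * u3 + a 3 * u1 := by rw [hyc 1]; simp [hg] <;> ring
  have hy2 : y 2 = a 0 * u0 + a 1 * u3 + a 3 * s := by rw [hyc 2]; simp [hg] <;> ring
  have hy3 : y 3 = a 0 * u2 + a 1 * u1 + a 2 * s := by rw [hyc 3]; simp [hg] <;> ring
  have hz0 : z 0 = b 1 * s + b 2 * u0 + b 3 * u2 := by rw [hzc 0]; simp [hg] <;> ring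
  have hz1 : z 1 = b 0 * s + b 2 * u3 + b 3 * u1 := by rw [hzc 1]; simp [hg] <;> ring
  have hz2 : z 2 = b 0 * u0 + b 1 * u3 + b 3 * s := by rw [hzc 2]; simp [hg] <;> ring
  have hz3 : z 3 = b 0 * u2 + b 1 * u1 + b 2 * s := by rw [hzc 3]; simp [hg] <;> ring
  set e : F n := (a 0 * b 1 + a 1 * b 0 + a 2 * b 3 + a 3 * b 2) * s
      + (a 0 * b 2 + a 2 * b 0) * u0 + (a 1 * b 3 + a 3 * b 1) * u1
      + (a 0 * b 3 + a 3 * b 0) * u2 + (a 1 * b 2 + a 2 * b 1) * u3 with he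
  have h02 : y 0 * z 2 + y 2 * z 0 = e * u0 := by
    rw [hy0, hy2, hz0, hz2, he]
    linear_combination (a 3*b 1 + a 1*b 3) * hs +
      (a 3*b 3*u2*s + a 3*b 1*u2*u3 + a 1*b 3*u2*u3 + a 1*b 1*u3*s) * h2
  have h31 : y 3 * z 1 + y 1 * z 3 = e * u1 := by
    rw [hy3, hy1, hz3, hz1, he]
    linear_combination (a 2*b 0 + a 0*b 2) * hs +
      (a 2*b 2*u3*s + a 2*b 0*u2*u3 + a 0*b 2*u2*u3 + a 0*b 0*u2*s) * h2
  have h03 : y 0 * z 3 + y 3 * z 0 = e * u2 := by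
    rw [hy0, hy3, hz0, hz3, he]
    linear_combination (a 2*b 1 + a 1*b 2) * hs +
      (a 2*b 2*u0*s + a 2*b 1*u0*u1 + a 1*b 2*u0*u1 + a 1*b 1*u1*s) * h2
  have h21 : y 2 * z 1 + y 1 * z 2 = e * u3 := by
    rw [hy2, hy1, hz2, hz1, he]
    linear_combination (a 3*b 0 + a 0*b 3) * hs +
      (a 3*b 3*u1*s + a 3*b 0*u0*u1 + a 0*b 3*u0*u1 + a 0*b 0*u0*s) * h2
  have h01 : y 0 * z 1 + y 1 * z 0 = e * s := by
    rw [hy0, hy1, hz0, hz1, he]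
    linear_combination (-1*(a 3*b 2) + -1*(a 2*b 3)) * hs +
      (a 3*b 3*u1*u2 + a 2*b 2*u0*u3) * h2
  have h23 : y 2 * z 3 + y 3 * z 2 = e * s := by
    rw [hy2, hy3, hz2, hz3, he]
    linear_combination (-1*(a 1*b 0) + -1*(a 0*b 1)) * hs +
      (a 1*b 1*u1*u3 + a 0*b 0*u0*u2) * h2
  -- e is nonzero
  have hy_ne : y ≠ 0 := by
    have := hind.ne_zero 0
    simpa using this
  have hz_ne : z ≠ 0 ∧ ∀ r : F n, r • z ≠ y := by
    have := linearIndependent_fin2.mp hind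
    simpa using this
  have he_ne : e ≠ 0 := by
    intro he0
    rw [he0] at h02 h31 h03 h21 h01 h23
    simp only [zero_mul] at h02 h31 h03 h21 h01 h23
    have hprop : ∀ i j : Fin 4, y i * z j = y j * z i := by
      have flip : ∀ p q : F n, p + q = 0 → p = q := by
        intro p q h; linear_combination h - q * h2
      intro i j
      fin_cases i <;> fin_cases j <;>
        simp only [Fin.isValue] <;>
        first
          | ring1
          | (exact flip _ _ h02) | (exact flip _ _ h31) | (exact flip _ _ h03)
          | (exact flip _ _ h21) | (exact flip _ _ h01) | (exact flip _ _ h23)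
          | (exact (flip _ _ h02).symm) | (exact (flip _ _ h31).symm)
          | (exact (flip _ _ h03).symm) | (exact (flip _ _ h21).symm)
          | (exact (flip _ _ h01).symm) | (exact (flip _ _ h23).symm)
    obtain ⟨k, hk⟩ := Function.ne_iff.mp hy_ne
    have hk' : y k ≠ 0 := by simpa using hk
    set r : F n := z k * (y k)⁻¹ with hrdef
    have hzy : z = r • y := by
      funext i
      have h := hprop k i
      show z i = r * y i
      rw [hrdef]
      field_simp
      first
        | linear_combination h
        | linear_combination -h
    rcases hz_ne with ⟨hz0', hzall⟩
    by_cases hr : r = 0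
    · exact hz0' (by rw [hzy, hr, zero_smul])
    · exact hzall r⁻¹ (by rw [hzy, smul_smul, inv_mul_cancel₀ hr, one_smul])
  -- conclude
  have ht : e ^ 2 ^ n ≠ 0 := pow_ne_zero _ he_ne
  have hw : (![(y 0 * z 2 + y 2 * z 0) ^ 2 ^ n,
         (y 3 * z 1 + y 1 * z 3) ^ 2 ^ n,
         (y 0 * z 3 + y 3 * z 0) ^ 2 ^ n,
         (y 2 * z 1 + y 1 * z 2) ^ 2 ^ n] : Fin 4 → F n) = e ^ 2 ^ n • x := by
    funext i
    fin_cases i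
    · show (y 0 * z 2 + y 2 * z 0) ^ 2 ^ n = e ^ 2 ^ n * x 0
      rw [h02, mul_pow, hu0, hpow]
    · show (y 3 * z 1 + y 1 * z 3) ^ 2 ^ n = e ^ 2 ^ n * x 1
      rw [h31, mul_pow, hu1, hpow]
    · show (y 0 * z 3 + y 3 * z 0) ^ 2 ^ n = e ^ 2 ^ n * x 2
      rw [h03, mul_pow, hu2, hpow]
    · show (y 2 * z 1 + y 1 * z 2) ^ 2 ^ n = e ^ 2 ^ n * x 3
      rw [h21, mul_pow, hu3, hpow]
  refine ⟨?_, e ^ 2 ^ n, ht, hw⟩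
  rw [hw]
  exact smul_ne_zero ht hx
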